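/- Fix 0 < s < t. Define F(z) = (1/4)[s² - (t - s + √(t²-4z))²] for z ∈ ℂ \ [t²/4, ∞), using the standard branch of the square root. Then G_t(z) = G_s(F(z)) for all z ∈ ℂ⁺, where G_t(z) = -4/(√(t²-4z)+t)² is the Cauchy–Stieltjes transform of the free 1/2-stable law ν_t⁽¹'²⁾. -/
import Mathlib


/-- Stieltjes transform G_t(z) = -4/(√(t²-4z)+t)² of the free 1/2-stable law. -/
noncomputable def Ghalf (t : ℝ) (z : ℂ) : ℂ :=
  -4 / (((t:ℂ)^2 - 4*z) ^ ((1:ℂ)/2) + (t:ℂ))^2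

/-- Subordination map F(z) = (1/4)[s² - (t-s+√(t²-4z))²]. -/
noncomputable def Fsub (s t : ℝ) (z : ℂ) : ℂ :=
  (1/4) * ((s:ℂ)^2 - ((t:ℂ) - (s:ℂ) + ((t:ℂ)^2 - 4*z) ^ ((1:ℂ)/2))^2)

theorem stmt12 (s t : ℝ) (hs : 0 < s) (hst : s < t) (z : ℂ) (hz : 0 < z.im) :
    Ghalf t z = Ghalf s (Fsub s t z) := by
  set u : ℂ := ((t:ℂ)^2 - 4*z) ^ ((1:ℂ)/2) with hu
  have hure : 0 ≤ u.re := by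
    rw [hu, one_div, Complex.cpow_inv_two_re]
    exact Real.sqrt_nonneg _
  set w : ℂ := (t:ℂ) - (s:ℂ) + u with hw
  have hwre : 0 < w.re := by
    rw [hw]
    simp only [Complex.add_re, Complex.sub_re, Complex.ofReal_re]
    nlinarith
  have key : ((s:ℂ)^2 - 4 * Fsub s t z) ^ ((1:ℂ)/2) = w := by
    have h1 : (s:ℂ)^2 - 4 * Fsub s t z = w ^ (2:ℕ) := by
      rw [Fsub, hw, hu]; ring
    rw [h1, one_div, Complex.sq_cpow_two_inv hwre]
  rw [Ghalf, Ghalf, key, show w + (s:ℂ) = u + (t:ℂ) by rw [hw]; ring]
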